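/- Under the admissibility constraints and for H ∈ [0, 3/4], one has b̃ ≥ 0 and b̃ − d̃·H + H·p* ≥ 0. -/
import Mathlib


/-- Binomial weight `w_k = (n choose k)·p_gen^k·(1 − p_gen)^(n−k)`. -/
noncomputable def wgt (n : ℕ) (p : ℝ) (k : ℕ) : ℝ :=
  (n.choose k : ℝ) * p ^ k * (1 - p) ^ (n - k)

/-- Aggregated coefficient, e.g. `ã = Σ_{k=1}^n a_k·w_k`. -/
noncomputable def agg (n : ℕ) (p : ℝ) (f : ℕ → ℝ) : ℝ :=
  ∑ k ∈ Finset.Icc 1 n, f k * wgt n p k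

/-- Admissibility constraints on the purification coefficients
`a_k, b_k, c_k, d_k` for `k = 1, …, n`. -/
def Admissible (n : ℕ) (a b c d : ℕ → ℝ) : Prop :=
  ∀ k ∈ Finset.Icc 1 n,
    (0 ≤ d k ∧ d k ≤ 1) ∧
    (-(4/3) * d k ≤ c k ∧ c k ≤ (4/3) * (1 - d k)) ∧
    (0 ≤ b k ∧ b k ≤ (3/4) * d k) ∧
    (-(4/3) * b k ≤ a k ∧ a k ≤ -(4/3) * b k + (3/4) * c k + d k)

lemma wgt_nonneg (n : ℕ) (p : ℝ) (hp : p ∈ Set.Icc (0:ℝ) 1) (k : ℕ) :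
    0 ≤ wgt n p k := by
  obtain ⟨h0, h1⟩ := hp
  have h2 : (0:ℝ) ≤ 1 - p := by linarith
  unfold wgt
  positivity

lemma wgt_sum (n : ℕ) (p : ℝ) :
    ∑ k ∈ Finset.Icc 1 n, wgt n p k = 1 - (1 - p) ^ n := by
  have h : ∑ k ∈ Finset.range (n + 1), wgt n p k = 1 := by
    have h := add_pow p (1 - p) n
    simp only [add_sub_cancel, one_pow] at h
    rw [show (∑ k ∈ Finset.range (n + 1), wgt n p k) =
        ∑ m ∈ Finset.range (n + 1), p ^ m * (1 - p) ^ (n - m) * (n.choose m : ℝ) from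
      Finset.sum_congr rfl (fun k _ => by simp [wgt]; ring), ← h]
  have hIcc : Finset.Icc 1 n = (Finset.range (n + 1)).erase 0 := by
    ext k
    simp [Finset.mem_Icc, Finset.mem_erase, Nat.lt_succ_iff, Nat.one_le_iff_ne_zero]
  rw [hIcc, Finset.sum_erase_eq_sub (by simp), h]
  simp [wgt]

/-- Under the admissibility constraints and for `H ∈ [0, 3/4]`,
one has `b̃ ≥ 0` and `b̃ − d̃·H + H·p* ≥ 0`. -/
theorem aggregated_b_bounds (n : ℕ) (hn : 1 ≤ n) (p : ℝ)
    (hp : p ∈ Set.Icc (0:ℝ) 1)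
    (a b c d : ℕ → ℝ) (hadm : Admissible n a b c d)
    (H : ℝ) (hH : H ∈ Set.Icc (0:ℝ) (3/4)) :
    0 ≤ agg n p b ∧
    0 ≤ agg n p b - agg n p d * H + H * (1 - (1 - p) ^ n) := by
  have hb : 0 ≤ agg n p b := by
    apply Finset.sum_nonneg
    intro k hk
    exact mul_nonneg ((hadm k hk).2.2.1.1) (wgt_nonneg n p hp k)
  refine ⟨hb, ?_⟩
  have hd : agg n p d ≤ 1 - (1 - p) ^ n := by
    rw [← wgt_sum n p]
    apply Finset.sum_le_sum
    intro k hk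
    have := (hadm k hk).1
    nlinarith [wgt_nonneg n p hp k]
  nlinarith [hH.1, hH.2]
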